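/- For r ≥ 2 and t ≥ 2, the total mutual-visibility number and dual mutual-visibility number of the glued t-ary tree GT(r,t) both equal t^{r−1}(t − 1), and in each case the number of maximum such sets equals t^{t^{r−1}}. -/

import Mathlib

open SimpleGraph

/-- Two vertices `u` and `v` are `S`-visible: there exists a shortest `u,v`-path
whose intersection with `S` is contained in `{u, v}`. -/
def isVisible {V : Type*} (G : SimpleGraph V) (S : Set V) (u v : V) : Prop :=
  ∃ p : G.Walk u v, p.IsPath ∧ p.length = G.dist u v ∧
    ∀ w ∈ p.support, w ∈ S → w = u ∨ w = v

/-- Two vertices `u` and `v` are `S`-positionable: every shortest `u,v`-path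
has its intersection with `S` contained in `{u, v}`. -/
def isPositionable {V : Type*} (G : SimpleGraph V) (S : Set V) (u v : V) : Prop :=
  ∀ p : G.Walk u v, p.IsPath → p.length = G.dist u v →
    ∀ w ∈ p.support, w ∈ S → w = u ∨ w = v

def isMVSet {V : Type*} (G : SimpleGraph V) (S : Set V) : Prop :=
  ∀ u ∈ S, ∀ v ∈ S, isVisible G S u v

def isOuterMVSet {V : Type*} (G : SimpleGraph V) (S : Set V) : Prop :=
  isMVSet G S ∧ ∀ u ∈ S, ∀ v ∉ S, isVisible G S u v

def isDualMVSet {V : Type*} (G : SimpleGraph V) (S : Set V) : Prop :=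
  isMVSet G S ∧ ∀ u ∉ S, ∀ v ∉ S, isVisible G S u v

def isTotalMVSet {V : Type*} (G : SimpleGraph V) (S : Set V) : Prop :=
  ∀ u v : V, isVisible G S u v

def isGPSet {V : Type*} (G : SimpleGraph V) (S : Set V) : Prop :=
  ∀ u ∈ S, ∀ v ∈ S, isPositionable G S u v

def isOuterGPSet {V : Type*} (G : SimpleGraph V) (S : Set V) : Prop :=
  isGPSet G S ∧ ∀ u ∈ S, ∀ v ∉ S, isPositionable G S u v

def isDualGPSet {V : Type*} (G : SimpleGraph V) (S : Set V) : Prop :=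
  isGPSet G S ∧ ∀ u ∉ S, ∀ v ∉ S, isPositionable G S u v

def isTotalGPSet {V : Type*} (G : SimpleGraph V) (S : Set V) : Prop :=
  ∀ u v : V, isPositionable G S u v

/-- Vertices of the generalized glued `t`-ary tree obtained from `n` copies of
the perfect `t`-ary tree of depth `r`: an internal vertex of copy `i` is encoded
as the list of child-choices from the root (length `< r`), and a quasi-leaf
(identified leaf) is encoded as such a list of length exactly `r`. -/
abbrev gluedVert (r n t : ℕ) : Type :=
  (Fin n × {l : List (Fin t) // l.length < r}) ⊕ {l : List (Fin t) // l.length = r}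

def gluedAdj (r n t : ℕ) : gluedVert r n t → gluedVert r n t → Prop
  | Sum.inl (i, s), Sum.inl (j, s') => i = j ∧ ∃ b, s'.val = s.val ++ [b]
  | Sum.inl (_, s), Sum.inr l => ∃ b, l.val = s.val ++ [b]
  | Sum.inr _, _ => False

/-- The generalized glued `t`-ary tree on `n` copies of the perfect `t`-ary tree
of depth `r`.  `gluedTree r 2 2` is the glued binary tree `GT(r)`,
`gluedTree r 2 t` is the glued `t`-ary tree `GT(r,t)`, and `gluedTree r n 2`
is the generalized glued binary tree `GT_r^(n)`. -/
def gluedTree (r n t : ℕ) : SimpleGraph (gluedVert r n t) :=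
  SimpleGraph.fromRel (gluedAdj r n t)

/-- The set of quasi-leaves. -/
def quasiLeaves (r n t : ℕ) : Set (gluedVert r n t) := {x | ∃ l, x = Sum.inr l}

/-- The vertex set of the `i`-th copy `T_r^(i)` of the perfect `t`-ary tree
(its internal vertices together with all quasi-leaves). -/
def copySet (r n t : ℕ) (i : Fin n) : Set (gluedVert r n t) :=
  {x | (∃ s, x = Sum.inl (i, s)) ∨ x ∈ quasiLeaves r n t}

/-!
A dual mutual-visibility set `S` of `GT(r,t)` contains no internal vertex. Below an internal
vertex of `S` at depth `< r - 1` some child lies in `S`, since two children outside `S` see each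
other only through their parent; so `S` contains an internal vertex `x` at depth `r - 1`. If the
parent `p` of `x` is in `S`, the quasi-leaves below `x` and the siblings of `x` avoid `S` and do
not see each other; if `p ∉ S`, the quasi-leaves below `x` lie in `S`, hence the mirror `x'` of
`x` in the other copy does not, and `p`, `x'` do not see each other. Consequently the two vertices
at depth `r - 1` above a group of quasi-leaves avoid `S`; their common neighbours are exactly that
group, so `S` misses a quasi-leaf of every group. Thus `|S| ≤ t^(r-1) (t-1)`, with equality only
for the sets `quasiLeavesExcept f` omitting the quasi-leaf `f w` of each group `w`. Conversely,
the quasi-leaves of a group have the same neighbours, so shortest paths can be rerouted through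
the omitted ones, and each `quasiLeavesExcept f` is a total mutual-visibility set.
-/

section Visibility

variable {V : Type*} {G : SimpleGraph V} {S : Set V} {u v : V}

lemma SimpleGraph.Walk.exists_eq_cons_cons_nil (p : G.Walk u v) (h : p.length = 2) :
    ∃ z, ∃ (h₁ : G.Adj u z) (h₂ : G.Adj z v), p = .cons h₁ (.cons h₂ .nil) := by
  match p, h with
  | .cons h₁ (.cons h₂ .nil), _ => exact ⟨_, h₁, h₂, rfl⟩

lemma SimpleGraph.Walk.exists_eq_cons_cons_cons_nil (p : G.Walk u v) (h : p.length = 3) :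
    ∃ z₁ z₂, ∃ (h₁ : G.Adj u z₁) (h₂ : G.Adj z₁ z₂) (h₃ : G.Adj z₂ v),
      p = .cons h₁ (.cons h₂ (.cons h₃ .nil)) := by
  match p, h with
  | .cons h₁ (.cons h₂ (.cons h₃ .nil)), _ => exact ⟨_, _, h₁, h₂, h₃, rfl⟩

lemma SimpleGraph.dist_eq_two_of_commonNeighbors_nonempty (hne : u ≠ v)
    (hnadj : ¬ G.Adj u v) (h : (G.commonNeighbors u v).Nonempty) : G.dist u v = 2 := by
  rw [dist, edist_eq_two_iff.mpr ⟨hne, hnadj, h⟩]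
  rfl

lemma SimpleGraph.dist_eq_three_of_adj_of_adj_of_adj {z₁ z₂ : V} (hne : u ≠ v)
    (hnadj : ¬ G.Adj u v) (hcn : G.commonNeighbors u v = ∅)
    (h₁ : G.Adj u z₁) (h₂ : G.Adj z₁ z₂) (h₃ : G.Adj z₂ v) : G.dist u v = 3 := by
  let p : G.Walk u v := .cons h₁ (.cons h₂ (.cons h₃ .nil))
  have hle : G.dist u v ≤ 3 := dist_le p
  have h0 : G.dist u v ≠ 0 := (Reachable.pos_dist_of_ne ⟨p⟩ hne).ne'
  have h1 : G.dist u v ≠ 1 := fun h => hnadj (dist_eq_one_iff_adj.mp h)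
  have h2 : G.dist u v ≠ 2 := fun h => by
    obtain ⟨q, hq⟩ := Reachable.exists_walk_length_eq_dist ⟨p⟩
    obtain ⟨z, hz₁, hz₂, -⟩ := q.exists_eq_cons_cons_nil (hq.trans h)
    exact (Set.eq_empty_iff_forall_notMem.mp hcn) z ⟨hz₁, hz₂.symm⟩
  omega

lemma not_isVisible_of_commonNeighbors_subset (hne : u ≠ v) (hnadj : ¬ G.Adj u v)
    (h : (G.commonNeighbors u v).Nonempty) (hS : G.commonNeighbors u v ⊆ S) :
    ¬ isVisible G S u v := by
  rintro ⟨p, -, hlen, hvis⟩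
  obtain ⟨z, h₁, h₂, rfl⟩ :=
    p.exists_eq_cons_cons_nil (hlen.trans (dist_eq_two_of_commonNeighbors_nonempty hne hnadj h))
  rcases hvis z (by simp) (hS ⟨h₁, h₂.symm⟩) with rfl | rfl
  exacts [h₁.ne rfl, h₂.ne rfl]

lemma not_isVisible_of_commonNeighbors_eq_singleton {x : V} (hne : u ≠ v)
    (hnadj : ¬ G.Adj u v) (hcn : G.commonNeighbors u v = {x}) (hx : x ∈ S) :
    ¬ isVisible G S u v :=
  not_isVisible_of_commonNeighbors_subset hne hnadj (hcn ▸ Set.singleton_nonempty x)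
    (hcn ▸ Set.singleton_subset_iff.mpr hx)

lemma not_isVisible_of_dist_eq_three (hd : G.dist u v = 3)
    (hS : ∀ z₁ z₂, G.Adj u z₁ → G.Adj z₁ z₂ → G.Adj z₂ v → z₁ ∈ S ∨ z₂ ∈ S) :
    ¬ isVisible G S u v := by
  rintro ⟨p, hp, hlen, hvis⟩
  obtain ⟨z₁, z₂, h₁, h₂, h₃, rfl⟩ := p.exists_eq_cons_cons_cons_nil (hlen.trans hd)
  have hnd := hp.support_nodup
  simp only [Walk.support_cons, Walk.support_nil, List.nodup_cons, List.mem_cons,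
    List.not_mem_nil] at hnd
  rcases hS z₁ z₂ h₁ h₂ h₃ with hz | hz
  · rcases hvis z₁ (by simp) hz with rfl | rfl <;> tauto
  · rcases hvis z₂ (by simp) hz with rfl | rfl <;> tauto

lemma SimpleGraph.Adj.piecewise_id {T : Set V} [DecidablePred (· ∈ T)] {f : V → V}
    (hf : ∀ x ∈ T, G.neighborSet x ⊆ G.neighborSet (f x)) {x y : V} (h : G.Adj x y) :
    G.Adj (T.piecewise f id x) (T.piecewise f id y) := by
  by_cases hx : x ∈ T <;> by_cases hy : y ∈ T <;>
    simp only [Set.piecewise_eq_of_mem, Set.piecewise_eq_of_notMem, hx, hy, not_false_eq_true,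
      id]
  · exact (hf y hy (hf x hx h).symm).symm
  · exact hf x hx h
  · exact (hf y hy h.symm).symm
  · exact h

/-- Moving every vertex of `S` other than `u, v` to a vertex outside `S` with a larger
neighbourhood is a graph homomorphism fixing `u` and `v`; it maps a shortest `u,v`-path to a
shortest `u,v`-path that avoids `S` internally. -/
theorem isTotalMVSet_of_forall_exists_neighborSet_subset (hG : G.Connected)
    (h : ∀ x ∈ S, ∃ y ∉ S, G.neighborSet x ⊆ G.neighborSet y) : isTotalMVSet G S := by
  classical
  choose! f hfS hf using h
  intro u v
  obtain ⟨p, hp⟩ := hG.exists_walk_length_eq_dist u v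
  set T := S \ {u, v} with hT
  let φ : G →g G := ⟨T.piecewise f id, fun h => h.piecewise_id fun x hx => hf x hx.1⟩
  have hfix : ∀ w ∉ T, φ w = w := fun w hw => Set.piecewise_eq_of_notMem _ _ _ hw
  let q := (p.map φ).copy (hfix u (by simp [hT])) (hfix v (by simp [hT]))
  have hq : q.length = G.dist u v := by simp [q, hp]
  refine ⟨q, q.isPath_of_length_eq_dist hq, hq, ?_⟩
  simp only [q, Walk.support_copy, Walk.support_map, List.mem_map]
  rintro _ ⟨w, -, rfl⟩ hwS
  by_cases hw : w ∈ T
  · exact absurd hwS (by simpa [φ, hw] using hfS w hw.1)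
  · rw [hfix w hw] at hwS ⊢
    by_contra! hne
    exact hw ⟨hwS, by simpa using hne⟩

lemma isTotalMVSet.isDualMVSet (h : isTotalMVSet G S) : isDualMVSet G S :=
  ⟨fun u _ v _ => h u v, fun u _ v _ => h u v⟩

end Visibility

section Maximum

variable {V ι : Type*} {P : Set V → Prop} {F : ι → Set V} {n : ℕ}

lemma ncard_le_of_forall_exists_subset (hfin : ∀ i, (F i).Finite)
    (hcard : ∀ i, (F i).ncard = n) (hsub : ∀ S, P S → ∃ i, S ⊆ F i) {S : Set V} (hS : P S) :
    S.ncard ≤ n := by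
  obtain ⟨i, hi⟩ := hsub S hS
  exact hcard i ▸ Set.ncard_le_ncard hi (hfin i)

lemma isGreatest_ncard_of_forall_exists_subset [Nonempty ι] (hF : ∀ i, P (F i))
    (hfin : ∀ i, (F i).Finite) (hcard : ∀ i, (F i).ncard = n)
    (hsub : ∀ S, P S → ∃ i, S ⊆ F i) : IsGreatest {k | ∃ S, P S ∧ S.ncard = k} n := by
  inhabit ι
  refine ⟨⟨F default, hF default, hcard default⟩, ?_⟩
  rintro _ ⟨S, hS, rfl⟩
  exact ncard_le_of_forall_exists_subset hfin hcard hsub hS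

lemma setOf_forall_ncard_le_eq_range [Nonempty ι] (hF : ∀ i, P (F i))
    (hfin : ∀ i, (F i).Finite) (hcard : ∀ i, (F i).ncard = n)
    (hsub : ∀ S, P S → ∃ i, S ⊆ F i) :
    {S | P S ∧ ∀ T, P T → T.ncard ≤ S.ncard} = Set.range F := by
  inhabit ι
  ext S
  constructor
  · rintro ⟨hS, hmax⟩
    obtain ⟨i, hi⟩ := hsub S hS
    refine ⟨i, (Set.eq_of_subset_of_ncard_le hi ?_ (hfin i)).symm⟩
    rw [hcard i, ← hcard default]
    exact hmax _ (hF default)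
  · rintro ⟨i, rfl⟩
    exact ⟨hF i, fun T hT => hcard i ▸ ncard_le_of_forall_exists_subset hfin hcard hsub hT⟩

end Maximum

section ListLength

variable (α : Type*) {r : ℕ}

instance [Finite α] : Finite {w : List α // w.length + 1 = r} :=
  ((List.finite_length_eq α (r - 1)).subset
    fun w (hw : w.length + 1 = r) => show w.length = r - 1 by omega).to_subtype

lemma card_list_length_add_one_eq [Fintype α] (hr : 0 < r) :
    Nat.card {w : List α // w.length + 1 = r} = Fintype.card α ^ (r - 1) := by
  rw [Nat.card_congr (Equiv.subtypeEquivRight (p := fun w : List α => w.length + 1 = r)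
    (q := fun w => w.length = r - 1) fun w => by omega)]
  change Nat.card (List.Vector α (r - 1)) = _
  rw [Nat.card_eq_fintype_card, card_vector]

end ListLength

namespace gluedTree

variable {r t : ℕ}

section Adjacency

variable {i j : Fin 2} {s s' : {l : List (Fin t) // l.length < r}}
  {l l' : {l : List (Fin t) // l.length = r}}

lemma adj_inl_inl :
    (gluedTree r 2 t).Adj (.inl (i, s)) (.inl (j, s')) ↔
      i = j ∧ ((∃ b, s'.val = s.val ++ [b]) ∨ ∃ b, s.val = s'.val ++ [b]) := by
  have hne : ∀ {s s' : {l : List (Fin t) // l.length < r}} {b},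
      s'.val = s.val ++ [b] → s ≠ s' :=
    fun h he => by simpa [he] using congrArg List.length h
  simp only [gluedTree, fromRel_adj, gluedAdj, ne_eq, Sum.inl.injEq, Prod.mk.injEq]
  constructor
  · rintro ⟨-, ⟨rfl, h⟩ | ⟨rfl, h⟩⟩
    exacts [⟨rfl, .inl h⟩, ⟨rfl, .inr h⟩]
  · rintro ⟨rfl, ⟨b, h⟩ | ⟨b, h⟩⟩
    exacts [⟨fun he => hne h he.2, .inl ⟨rfl, b, h⟩⟩,
      ⟨fun he => hne h he.2.symm, .inr ⟨rfl, b, h⟩⟩]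

lemma adj_inl_inr :
    (gluedTree r 2 t).Adj (.inl (i, s)) (.inr l) ↔ ∃ b, l.val = s.val ++ [b] := by
  simp [gluedTree, gluedAdj]

lemma adj_inr_inl :
    (gluedTree r 2 t).Adj (.inr l) (.inl (i, s)) ↔ ∃ b, l.val = s.val ++ [b] := by
  rw [adj_comm, adj_inl_inr]

lemma not_adj_inr_inr : ¬ (gluedTree r 2 t).Adj (.inr l) (.inr l') := by
  simp [gluedTree, gluedAdj]

lemma adj_inr_iff {z : gluedVert r 2 t} :
    (gluedTree r 2 t).Adj (.inr l) z ↔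
      ∃ i s, z = .inl (i, s) ∧ ∃ b, l.val = s.val ++ [b] := by
  rcases z with ⟨i, s⟩ | l'
  · refine adj_inr_inl.trans ⟨fun h => ⟨i, s, rfl, h⟩, ?_⟩
    rintro ⟨i', s', he, h⟩
    simp only [Sum.inl.injEq, Prod.mk.injEq] at he
    obtain ⟨rfl, rfl⟩ := he
    exact h
  · simp [not_adj_inr_inr]

lemma not_adj_inl_inl_of_ne (hij : i ≠ j) :
    ¬ (gluedTree r 2 t).Adj (.inl (i, s)) (.inl (j, s')) :=
  fun h => hij (adj_inl_inl.mp h).1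

lemma not_adj_inl_inl_of_length_eq (h : s.val.length = s'.val.length) :
    ¬ (gluedTree r 2 t).Adj (.inl (i, s)) (.inl (j, s')) := by
  rintro hadj
  obtain ⟨-, ⟨b, hb⟩ | ⟨b, hb⟩⟩ := adj_inl_inl.mp hadj <;>
    · have := congrArg List.length hb
      simp at this
      omega

lemma not_adj_inl_inr_of_length_add_one_lt (h : s.val.length + 1 < r) :
    ¬ (gluedTree r 2 t).Adj (.inl (i, s)) (.inr l) := by
  rintro hadj
  obtain ⟨b, hb⟩ := adj_inl_inr.mp hadj
  have := congrArg List.length hb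
  simp only [l.prop, List.length_append, List.length_singleton] at this
  omega

end Adjacency

lemma reachable_inl_nil (i : Fin 2) (s : List (Fin t)) (hs : s.length < r) :
    (gluedTree r 2 t).Reachable (.inl (i, ⟨s, hs⟩))
      (.inl (i, ⟨[], (Nat.zero_le _).trans_lt hs⟩)) := by
  induction s using List.reverseRecOn with
  | nil => rfl
  | append_singleton s a ih =>
    have hs' : s.length < r := by simp at hs; omega
    have hadj : (gluedTree r 2 t).Adj (.inl (i, ⟨s, hs'⟩)) (.inl (i, ⟨s ++ [a], hs⟩)) :=
      adj_inl_inl.mpr ⟨rfl, .inl ⟨a, rfl⟩⟩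
    exact hadj.reachable.symm.trans (ih hs')

lemma connected (hr : 0 < r) (ht : 0 < t) : (gluedTree r 2 t).Connected := by
  let c : Fin t := ⟨0, ht⟩
  let w : List (Fin t) := List.replicate (r - 1) c
  have hw : w.length < r := by simp [w]; omega
  have hwc : (w ++ [c]).length = r := by simp [w]; omega
  have hroot i : (gluedTree r 2 t).Reachable (.inl (i, ⟨[], hr⟩)) (.inl (0, ⟨[], hr⟩)) :=
    have h₁ : (gluedTree r 2 t).Adj (.inl (i, ⟨w, hw⟩)) (.inr ⟨w ++ [c], hwc⟩) :=
      adj_inl_inr.mpr ⟨c, rfl⟩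
    have h₂ : (gluedTree r 2 t).Adj (.inr ⟨w ++ [c], hwc⟩) (.inl (0, ⟨w, hw⟩)) :=
      adj_inr_inl.mpr ⟨c, rfl⟩
    (reachable_inl_nil i w hw).symm.trans <|
      h₁.reachable.trans <| h₂.reachable.trans (reachable_inl_nil 0 w hw)
  have hall : ∀ x, (gluedTree r 2 t).Reachable x (.inl (0, ⟨[], hr⟩)) := by
    rintro (⟨i, s, hs⟩ | ⟨l, hl⟩)
    · exact (reachable_inl_nil i s hs).trans (hroot i)
    · obtain ⟨L, b, rfl⟩ :=
        (List.eq_nil_or_concat' l).resolve_left (by rintro rfl; simp at hl; omega)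
      have hL : L.length < r := by simp at hl; omega
      have hadj : (gluedTree r 2 t).Adj (.inr ⟨L ++ [b], hl⟩) (.inl (0, ⟨L, hL⟩)) :=
        adj_inr_inl.mpr ⟨b, rfl⟩
      exact hadj.reachable.trans (reachable_inl_nil 0 L hL)
  exact (connected_iff_exists_forall_reachable _).mpr ⟨_, fun x => (hall x).symm⟩

section CommonNeighbors

variable {i j : Fin 2}

lemma mem_commonNeighbors_inl_inl_of_ne (hij : i ≠ j)
    {s s' : {l : List (Fin t) // l.length < r}} {z : gluedVert r 2 t}
    (hz : z ∈ (gluedTree r 2 t).commonNeighbors (.inl (i, s)) (.inl (j, s'))) :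
    s = s' ∧ ∃ l, z = .inr l ∧ ∃ c, l.val = s.val ++ [c] := by
  obtain ⟨h₁, h₂⟩ := hz
  rcases z with ⟨m, u⟩ | l
  · exact absurd ((adj_inl_inl.mp h₁).1.trans (adj_inl_inl.mp h₂).1.symm) hij
  · obtain ⟨c, hc⟩ := adj_inl_inr.mp h₁
    obtain ⟨d, hd⟩ := adj_inl_inr.mp h₂
    exact ⟨Subtype.ext (List.append_inj_left' (hc.symm.trans hd) rfl), l, rfl, c, hc⟩

lemma commonNeighbors_inl_snoc_inl_snoc {s : List (Fin t)} (hs : s.length < r) {a b : Fin t}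
    (hab : a ≠ b) (ha : (s ++ [a]).length < r) (hb : (s ++ [b]).length < r) :
    (gluedTree r 2 t).commonNeighbors (.inl (i, ⟨s ++ [a], ha⟩)) (.inl (i, ⟨s ++ [b], hb⟩)) =
      {.inl (i, ⟨s, hs⟩)} := by
  ext z
  simp only [mem_commonNeighbors, Set.mem_singleton_iff]
  constructor
  · rintro ⟨h₁, h₂⟩
    rcases z with ⟨m, u⟩ | l
    · rw [adj_inl_inl] at h₁ h₂
      obtain ⟨rfl, ⟨c, hc⟩ | ⟨c, hc⟩⟩ := h₁ <;> obtain ⟨-, ⟨d, hd⟩ | ⟨d, hd⟩⟩ := h₂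
      · exact absurd (by simpa using hc.symm.trans hd : a = b ∧ c = d).1 hab
      · simpa [hc] using congrArg List.length hd
      · simpa [hd] using congrArg List.length hc
      · simp only [Sum.inl.injEq, Prod.mk.injEq, true_and]
        exact Subtype.ext (List.append_inj_left' hc rfl).symm
    · obtain ⟨c, hc⟩ := adj_inl_inr.mp h₁
      obtain ⟨d, hd⟩ := adj_inl_inr.mp h₂
      exact absurd (by simpa using hc.symm.trans hd : a = b ∧ c = d).1 hab
  · rintro rfl
    exact ⟨adj_inl_inl.mpr ⟨rfl, .inr ⟨a, rfl⟩⟩, adj_inl_inl.mpr ⟨rfl, .inr ⟨b, rfl⟩⟩⟩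

lemma commonNeighbors_inl_inr_snoc_snoc {s : List (Fin t)} {e c : Fin t} (hs : s.length < r)
    (he : (s ++ [e]).length < r) (hl : (s ++ [e] ++ [c]).length = r) :
    (gluedTree r 2 t).commonNeighbors (.inl (i, ⟨s, hs⟩)) (.inr ⟨s ++ [e] ++ [c], hl⟩) =
      {.inl (i, ⟨s ++ [e], he⟩)} := by
  ext z
  simp only [mem_commonNeighbors, Set.mem_singleton_iff]
  constructor
  · rintro ⟨h₁, h₂⟩
    obtain ⟨m, u, rfl, b, hb⟩ := adj_inr_iff.mp h₂
    obtain ⟨rfl, -⟩ := adj_inl_inl.mp h₁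
    obtain rfl : u = ⟨s ++ [e], he⟩ := Subtype.ext (List.append_inj_left' hb rfl).symm
    rfl
  · rintro rfl
    exact ⟨adj_inl_inl.mpr ⟨rfl, .inl ⟨e, rfl⟩⟩, adj_inr_inl.mpr ⟨c, rfl⟩⟩

lemma commonNeighbors_inr_inl_eq_empty {l : {l : List (Fin t) // l.length = r}}
    {v : {l : List (Fin t) // l.length < r}} (hv : v.val.length + 1 = r) :
    (gluedTree r 2 t).commonNeighbors (.inr l) (.inl (i, v)) = ∅ := by
  refine Set.eq_empty_of_forall_notMem fun z ⟨h₁, h₂⟩ => ?_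
  obtain ⟨m, u, rfl, b, hb⟩ := adj_inr_iff.mp h₁
  refine not_adj_inl_inl_of_length_eq ?_ h₂
  have := congrArg List.length hb
  simp only [l.prop, List.length_append, List.length_singleton] at this
  omega

end CommonNeighbors

section DualMVSet

variable {S : Set (gluedVert r 2 t)}

lemma exists_snoc_mem_of_isDualMVSet (hS : isDualMVSet (gluedTree r 2 t) S) (ht : 2 ≤ t)
    {k : Fin 2} {w : List (Fin t)} {hw : w.length < r} (hx : .inl (k, ⟨w, hw⟩) ∈ S)
    (hdeep : w.length + 1 < r) :
    ∃ c, ∃ h : (w ++ [c]).length < r, .inl (k, ⟨w ++ [c], h⟩) ∈ S := by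
  by_contra! hnot
  have ha : (w ++ [(⟨0, by omega⟩ : Fin t)]).length < r := by simp; omega
  have hb : (w ++ [(⟨1, by omega⟩ : Fin t)]).length < r := by simp; omega
  exact not_isVisible_of_commonNeighbors_eq_singleton (by simp)
    (not_adj_inl_inl_of_length_eq (by simp))
    (commonNeighbors_inl_snoc_inl_snoc hw (by simp) ha hb) hx
    (hS.2 _ (hnot _ ha) _ (hnot _ hb))

lemma exists_mem_length_add_one_eq_of_isDualMVSet (hS : isDualMVSet (gluedTree r 2 t) S)
    (ht : 2 ≤ t) {k : Fin 2} {w : List (Fin t)} {hw : w.length < r}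
    (hx : .inl (k, ⟨w, hw⟩) ∈ S) :
    ∃ w' : List (Fin t), ∃ h : w'.length < r, w'.length + 1 = r ∧ .inl (k, ⟨w', h⟩) ∈ S := by
  by_cases hdeep : w.length + 1 < r
  · obtain ⟨c, _, hmem⟩ := exists_snoc_mem_of_isDualMVSet hS ht hx hdeep
    exact exists_mem_length_add_one_eq_of_isDualMVSet hS ht hmem
  · exact ⟨w, hw, by omega, hx⟩
termination_by r - w.length
decreasing_by simp; omega

lemma parent_notMem_of_isDualMVSet (hS : isDualMVSet (gluedTree r 2 t) S) (ht : 2 ≤ t)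
    {k : Fin 2} {w₀ : List (Fin t)} {e : Fin t} {hw₀ : w₀.length < r}
    {hw : (w₀ ++ [e]).length < r} (hlen : w₀.length + 2 = r)
    (hx : .inl (k, ⟨w₀ ++ [e], hw⟩) ∈ S) : .inl (k, ⟨w₀, hw₀⟩) ∉ S := by
  intro hp
  have hℓ : (w₀ ++ [e] ++ [e]).length = r := by simp; omega
  have hℓS : .inr ⟨w₀ ++ [e] ++ [e], hℓ⟩ ∉ S := fun hℓS =>
    not_isVisible_of_commonNeighbors_eq_singleton (by simp)
      (not_adj_inl_inr_of_length_add_one_lt (by simp; omega))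
      (commonNeighbors_inl_inr_snoc_snoc hw₀ hw hℓ) hx (hS.1 _ hp _ hℓS)
  obtain ⟨b, hbe⟩ := Fintype.exists_ne_of_one_lt_card (by simp; omega) e
  have hb : (w₀ ++ [b]).length < r := by simp; omega
  have hyS : .inl (k, ⟨w₀ ++ [b], hb⟩) ∉ S := fun hyS =>
    not_isVisible_of_commonNeighbors_eq_singleton (by simpa using hbe.symm)
      (not_adj_inl_inl_of_length_eq (by simp))
      (commonNeighbors_inl_snoc_inl_snoc hw₀ hbe.symm hw hb) hp (hS.1 _ hx _ hyS)
  have hℓx : (gluedTree r 2 t).Adj (.inr ⟨w₀ ++ [e] ++ [e], hℓ⟩) (.inl (k, ⟨w₀ ++ [e], hw⟩)) :=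
    adj_inr_inl.mpr ⟨e, rfl⟩
  have hxp : (gluedTree r 2 t).Adj (.inl (k, ⟨w₀ ++ [e], hw⟩)) (.inl (k, ⟨w₀, hw₀⟩)) :=
    adj_inl_inl.mpr ⟨rfl, .inr ⟨e, rfl⟩⟩
  have hpy : (gluedTree r 2 t).Adj (.inl (k, ⟨w₀, hw₀⟩)) (.inl (k, ⟨w₀ ++ [b], hb⟩)) :=
    adj_inl_inl.mpr ⟨rfl, .inl ⟨b, rfl⟩⟩
  refine not_isVisible_of_dist_eq_three ?_ ?_ (hS.2 _ hℓS _ hyS)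
  · refine dist_eq_three_of_adj_of_adj_of_adj (by simp) ?_
      (commonNeighbors_inr_inl_eq_empty (by simp; omega)) hℓx hxp hpy
    rw [adj_inr_inl]
    rintro ⟨d, hd⟩
    exact hbe (by simpa using hd : e = b ∧ e = d).1.symm
  · -- a shortest path leaves the quasi-leaf through `w₀ ++ [e]`, either in copy `k` (which lies
    -- in `S`) or in the other copy, which has no common neighbour with `w₀ ++ [b]`
    intro z₁ z₂ h₁ h₂ h₃
    obtain ⟨m, u, rfl, d, hd⟩ := adj_inr_iff.mp h₁
    obtain rfl : u = ⟨w₀ ++ [e], hw⟩ := Subtype.ext (List.append_inj_left' hd rfl).symm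
    by_cases hm : m = k
    · exact .inl (hm ▸ hx)
    · obtain ⟨hwb, -⟩ := mem_commonNeighbors_inl_inl_of_ne hm ⟨h₂, h₃.symm⟩
      exact absurd (by simpa using hwb : e = b) hbe.symm

lemma parent_mem_of_isDualMVSet (hS : isDualMVSet (gluedTree r 2 t) S)
    {k : Fin 2} {w₀ : List (Fin t)} {e : Fin t} {hw₀ : w₀.length < r}
    {hw : (w₀ ++ [e]).length < r} (hlen : w₀.length + 2 = r)
    (hx : .inl (k, ⟨w₀ ++ [e], hw⟩) ∈ S) : .inl (k, ⟨w₀, hw₀⟩) ∈ S := by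
  by_contra hp
  obtain ⟨j, hjk⟩ := exists_ne k
  have hℓ c : (w₀ ++ [e] ++ [c]).length = r := by simp; omega
  have hℓS c : .inr ⟨w₀ ++ [e] ++ [c], hℓ c⟩ ∈ S := by
    by_contra hℓS
    exact not_isVisible_of_commonNeighbors_eq_singleton (by simp)
      (not_adj_inl_inr_of_length_add_one_lt (by simp; omega))
      (commonNeighbors_inl_inr_snoc_snoc hw₀ hw (hℓ c)) hx (hS.2 _ hp _ hℓS)
  have hxℓ : (gluedTree r 2 t).Adj (.inl (k, ⟨w₀ ++ [e], hw⟩)) (.inr ⟨w₀ ++ [e] ++ [e], hℓ e⟩) :=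
    adj_inl_inr.mpr ⟨e, rfl⟩
  have hℓx' : (gluedTree r 2 t).Adj (.inr ⟨w₀ ++ [e] ++ [e], hℓ e⟩) (.inl (j, ⟨w₀ ++ [e], hw⟩)) :=
    adj_inr_inl.mpr ⟨e, rfl⟩
  have hx'S : .inl (j, ⟨w₀ ++ [e], hw⟩) ∉ S := fun hx'S => by
    refine not_isVisible_of_commonNeighbors_subset (by simpa using hjk.symm)
      (not_adj_inl_inl_of_ne hjk.symm) ⟨_, hxℓ, hℓx'.symm⟩ ?_ (hS.1 _ hx _ hx'S)
    intro z hz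
    obtain ⟨-, l, rfl, c, hc⟩ := mem_commonNeighbors_inl_inl_of_ne hjk.symm hz
    exact (Subtype.ext hc : l = ⟨_, hℓ c⟩) ▸ hℓS c
  refine not_isVisible_of_dist_eq_three ?_ ?_ (hS.2 _ hp _ hx'S)
  · refine dist_eq_three_of_adj_of_adj_of_adj (by simp)
      (not_adj_inl_inl_of_ne hjk.symm) ?_ (adj_inl_inl.mpr ⟨rfl, .inl ⟨e, rfl⟩⟩) hxℓ hℓx'
    refine Set.eq_empty_of_forall_notMem fun z hz => ?_
    obtain ⟨h, -⟩ := mem_commonNeighbors_inl_inl_of_ne hjk.symm hz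
    simp at h
  · -- the last inner vertex is a quasi-leaf below `w₀ ++ [e]` (which lies in `S`) or lies in
    -- copy `j`, where it has no common neighbour with `w₀` in copy `k`
    intro z₁ z₂ h₁ h₂ h₃
    rcases z₂ with ⟨m, u⟩ | l
    · obtain rfl : m = j := (adj_inl_inl.mp h₃).1
      obtain ⟨rfl, l, -, c, hc⟩ := mem_commonNeighbors_inl_inl_of_ne hjk.symm ⟨h₁, h₂.symm⟩
      have := congrArg List.length hc
      simp only [l.prop, List.length_append, List.length_singleton] at this
      omega
    · obtain ⟨c, hc⟩ := adj_inr_inl.mp h₃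
      exact .inr ((Subtype.ext hc : l = ⟨_, hℓ c⟩) ▸ hℓS c)

theorem inl_notMem_of_isDualMVSet (hS : isDualMVSet (gluedTree r 2 t) S) (hr : 2 ≤ r)
    (ht : 2 ≤ t) (i : Fin 2) (s : {l : List (Fin t) // l.length < r}) : .inl (i, s) ∉ S := by
  intro hs
  obtain ⟨w, hw, hwr, hx⟩ := exists_mem_length_add_one_eq_of_isDualMVSet hS ht hs
  obtain ⟨w₀, e, rfl⟩ :=
    (List.eq_nil_or_concat' w).resolve_left (by rintro rfl; simp at hwr; omega)
  have hlen : w₀.length + 2 = r := by simp at hwr; omega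
  exact parent_notMem_of_isDualMVSet hS ht (hw₀ := by omega) hlen hx
    (parent_mem_of_isDualMVSet hS hlen hx)

end DualMVSet

section QuasiLeaves

/-- Groups are indexed by the parent word `w`; `w.length + 1 = r` rather than `= r - 1` makes
`w ++ [c]` a quasi-leaf without assuming `0 < r`. -/
def quasiLeaf (w : {w : List (Fin t) // w.length + 1 = r}) (c : Fin t) : gluedVert r 2 t :=
  .inr ⟨w.val ++ [c], by simp [w.prop]⟩

variable {w : {w : List (Fin t) // w.length + 1 = r}} {c : Fin t}

lemma quasiLeaf_injective :
    Function.Injective fun p : {w : List (Fin t) // w.length + 1 = r} × Fin t =>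
      quasiLeaf p.1 p.2 := by
  rintro ⟨⟨w, hw⟩, c⟩ ⟨⟨w', hw'⟩, c'⟩ h
  obtain ⟨rfl, rfl⟩ : w = w' ∧ c = c' := by simpa [quasiLeaf] using h
  rfl

lemma exists_quasiLeaf_eq (hr : 0 < r) (l : {l : List (Fin t) // l.length = r}) :
    ∃ w c, quasiLeaf w c = .inr l := by
  obtain ⟨l, hl⟩ := l
  obtain ⟨w, c, rfl⟩ :=
    (List.eq_nil_or_concat' l).resolve_left (by rintro rfl; simp at hl; omega)
  exact ⟨⟨w, by simpa using hl⟩, c, rfl⟩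

lemma adj_quasiLeaf_iff {z : gluedVert r 2 t} :
    (gluedTree r 2 t).Adj (quasiLeaf w c) z ↔ ∃ i, z = .inl (i, ⟨w.val, by omega⟩) := by
  rw [quasiLeaf, adj_inr_iff]
  constructor
  · rintro ⟨i, s, rfl, b, hb⟩
    exact ⟨i, by congr 2; exact Subtype.ext (List.append_inj_left' hb rfl).symm⟩
  · rintro ⟨i, rfl⟩
    exact ⟨i, _, rfl, c, rfl⟩

lemma neighborSet_quasiLeaf (c' : Fin t) :
    (gluedTree r 2 t).neighborSet (quasiLeaf w c) =
      (gluedTree r 2 t).neighborSet (quasiLeaf w c') := by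
  ext z
  simp [adj_quasiLeaf_iff]

lemma exists_quasiLeaf_notMem_of_isDualMVSet {S : Set (gluedVert r 2 t)}
    (hS : isDualMVSet (gluedTree r 2 t) S) (hr : 2 ≤ r) (ht : 2 ≤ t)
    (w : {w : List (Fin t) // w.length + 1 = r}) : ∃ c, quasiLeaf w c ∉ S := by
  by_contra! h
  have hw : w.val.length < r := by omega
  have h₀ : (0 : Fin 2) ≠ 1 := by decide
  refine not_isVisible_of_commonNeighbors_subset (by simp) (not_adj_inl_inl_of_ne h₀)
    ⟨quasiLeaf w ⟨0, by omega⟩, adj_inl_inr.mpr ⟨_, rfl⟩, adj_inl_inr.mpr ⟨_, rfl⟩⟩ ?_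
    (hS.2 _ (inl_notMem_of_isDualMVSet hS hr ht 0 ⟨w, hw⟩) _
      (inl_notMem_of_isDualMVSet hS hr ht 1 ⟨w, hw⟩))
  intro z hz
  obtain ⟨-, l, rfl, c, hc⟩ := mem_commonNeighbors_inl_inl_of_ne h₀ hz
  exact (congrArg Sum.inr (Subtype.ext hc) : _ = quasiLeaf w c) ▸ h c

end QuasiLeaves

section QuasiLeavesExcept

def quasiLeavesExcept (f : {w : List (Fin t) // w.length + 1 = r} → Fin t) :
    Set (gluedVert r 2 t) :=
  (fun p : {w : List (Fin t) // w.length + 1 = r} × Fin t => quasiLeaf p.1 p.2) ''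
    {p | p.2 ≠ f p.1}

variable {f : {w : List (Fin t) // w.length + 1 = r} → Fin t}

lemma quasiLeaf_mem_quasiLeavesExcept_iff {w : {w : List (Fin t) // w.length + 1 = r}}
    {c : Fin t} : quasiLeaf w c ∈ quasiLeavesExcept f ↔ c ≠ f w :=
  quasiLeaf_injective.mem_set_image (a := (w, c))

lemma finite_quasiLeavesExcept : (quasiLeavesExcept f).Finite :=
  (Set.toFinite _).image _

lemma ncard_quasiLeavesExcept (hr : 0 < r) :
    (quasiLeavesExcept f).ncard = t ^ (r - 1) * (t - 1) := by
  have hgraph : {p : _ × Fin t | p.2 ≠ f p.1} = (Set.range fun w => (w, f w))ᶜ := by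
    ext ⟨w, c⟩
    simp [eq_comm]
  rw [quasiLeavesExcept, Set.ncard_image_of_injective _ quasiLeaf_injective, hgraph,
    Set.ncard_compl, Set.ncard_range_of_injective fun w w' h => (Prod.mk.inj h).1,
    Nat.card_prod, Nat.card_fin, card_list_length_add_one_eq _ hr, Fintype.card_fin,
    Nat.mul_sub_one]

lemma quasiLeavesExcept_injective :
    Function.Injective (quasiLeavesExcept : (_ → Fin t) → Set (gluedVert r 2 t)) := by
  intro f g h
  funext w
  by_contra hne
  have hmem : quasiLeaf w (g w) ∈ quasiLeavesExcept f :=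
    quasiLeaf_mem_quasiLeavesExcept_iff.mpr (Ne.symm hne)
  rw [h, quasiLeaf_mem_quasiLeavesExcept_iff] at hmem
  exact hmem rfl

lemma isTotalMVSet_quasiLeavesExcept (hr : 0 < r) (ht : 0 < t) :
    isTotalMVSet (gluedTree r 2 t) (quasiLeavesExcept f) := by
  refine isTotalMVSet_of_forall_exists_neighborSet_subset (connected hr ht) ?_
  rintro _ ⟨⟨w, c⟩, -, rfl⟩
  exact ⟨quasiLeaf w (f w), by simp [quasiLeaf_mem_quasiLeavesExcept_iff],
    (neighborSet_quasiLeaf (f w)).le⟩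

lemma exists_subset_quasiLeavesExcept_of_isDualMVSet {S : Set (gluedVert r 2 t)}
    (hS : isDualMVSet (gluedTree r 2 t) S) (hr : 2 ≤ r) (ht : 2 ≤ t) :
    ∃ f, S ⊆ quasiLeavesExcept f := by
  choose f hf using exists_quasiLeaf_notMem_of_isDualMVSet hS hr ht
  refine ⟨f, ?_⟩
  rintro (⟨i, s⟩ | l) hx
  · exact absurd hx (inl_notMem_of_isDualMVSet hS hr ht i s)
  · obtain ⟨w, c, hwc⟩ := exists_quasiLeaf_eq (by omega) l
    rw [← hwc] at hx ⊢
    rw [quasiLeaf_mem_quasiLeavesExcept_iff]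
    rintro rfl
    exact hf w hx

lemma isGreatest_ncard_and_ncard_maximum {P : Set (gluedVert r 2 t) → Prop} (hr : 2 ≤ r)
    (ht : 2 ≤ t) (hP : ∀ f, P (quasiLeavesExcept f))
    (hdual : ∀ S, P S → isDualMVSet (gluedTree r 2 t) S) :
    IsGreatest {k | ∃ S, P S ∧ S.ncard = k} (t ^ (r - 1) * (t - 1)) ∧
      {S | P S ∧ ∀ T, P T → T.ncard ≤ S.ncard}.ncard = t ^ t ^ (r - 1) := by
  have : Nonempty (Fin t) := ⟨⟨0, by omega⟩⟩
  have hcard : ∀ f, (quasiLeavesExcept f).ncard = t ^ (r - 1) * (t - 1) := fun _ =>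
    ncard_quasiLeavesExcept (by omega)
  have hsub S hS := exists_subset_quasiLeavesExcept_of_isDualMVSet (hdual S hS) hr ht
  refine ⟨isGreatest_ncard_of_forall_exists_subset hP (fun _ => finite_quasiLeavesExcept)
    hcard hsub, ?_⟩
  rw [setOf_forall_ncard_le_eq_range hP (fun _ => finite_quasiLeavesExcept) hcard hsub,
    Set.ncard_range_of_injective quasiLeavesExcept_injective, Nat.card_fun, Nat.card_fin,
    card_list_length_add_one_eq _ (by omega), Fintype.card_fin]

end QuasiLeavesExcept

end gluedTree

theorem stmt18 (r t : ℕ) (hr : 2 ≤ r) (ht : 2 ≤ t) :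
    IsGreatest {k : ℕ | ∃ S : Set (gluedVert r 2 t),
      isTotalMVSet (gluedTree r 2 t) S ∧ S.ncard = k} (t ^ (r - 1) * (t - 1)) ∧
    IsGreatest {k : ℕ | ∃ S : Set (gluedVert r 2 t),
      isDualMVSet (gluedTree r 2 t) S ∧ S.ncard = k} (t ^ (r - 1) * (t - 1)) ∧
    {S : Set (gluedVert r 2 t) | isTotalMVSet (gluedTree r 2 t) S ∧
        ∀ T : Set (gluedVert r 2 t), isTotalMVSet (gluedTree r 2 t) T →
          T.ncard ≤ S.ncard}.ncard = t ^ t ^ (r - 1) ∧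
    {S : Set (gluedVert r 2 t) | isDualMVSet (gluedTree r 2 t) S ∧
        ∀ T : Set (gluedVert r 2 t), isDualMVSet (gluedTree r 2 t) T →
          T.ncard ≤ S.ncard}.ncard = t ^ t ^ (r - 1) := by
  have htotal (f : {w : List (Fin t) // w.length + 1 = r} → Fin t) :=
    gluedTree.isTotalMVSet_quasiLeavesExcept (f := f) (by omega) (by omega)
  obtain ⟨hmax_total, hcount_total⟩ :=
    gluedTree.isGreatest_ncard_and_ncard_maximum hr ht htotal fun _ hS => hS.isDualMVSet
  obtain ⟨hmax_dual, hcount_dual⟩ := gluedTree.isGreatest_ncard_and_ncard_maximum hr ht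
    (fun f => (htotal f).isDualMVSet) fun _ hS => hS
  exact ⟨hmax_total, hmax_dual, hcount_total, hcount_dual⟩
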